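/- arXiv:1206.1952 — 3 statements merged into one kernel-verified Lean document; each statement's English description precedes it below -/
import Mathlib

section
/- Let G be a finite connected graph with graph distance d, let L ≥ ℓ ≥ 0 be integers and q ∈ (0,1). Suppose f : G → ℝ≥0 is (ℓ,q)-subharmonic in the ball B_L(x), meaning that for every ball B_ℓ(y) ⊆ B_L(x) one has f(y) ≤ q · max_{z ∈ B_{ℓ+1}(y)} f(z). Then f(x) ≤ q^⌊(L+1)/(ℓ+1)⌋ · max_{z ∈ G} f(z). -/
/-!
If `d(x, y) + n(ℓ + 1) ≤ L + 1` with `n ≥ 1`, then `B_ℓ(y) ⊆ B_L(x)`, so subharmonicity bounds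
`f y` by `q` times the maximum of `f` over `B_{ℓ+1}(y)`, and every point of that ball satisfies the
same condition with `n - 1`. Induction on `n` gives `f y ≤ qⁿ · max f`; take `y = x` and
`n = ⌊(L + 1)/(ℓ + 1)⌋`.
-/

open Set

namespace SimpleGraph

variable {V : Type*} (G : SimpleGraph V)

def IsSubharmonicOn (ℓ : ℕ) (q : ℝ) (f : V → ℝ) (x : V) (L : ℕ) : Prop :=
  ∀ y : V, {z : V | G.dist y z ≤ ℓ} ⊆ {z : V | G.dist x z ≤ L} →
    f y ≤ q * ⨆ z : {z : V // G.dist y z ≤ ℓ + 1}, f z.1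

variable {G}

theorem Connected.setOf_dist_le_subset {x y : V} {r R : ℕ} (hG : G.Connected)
    (h : G.dist x y + r ≤ R) : {z : V | G.dist y z ≤ r} ⊆ {z : V | G.dist x z ≤ R} := by
  intro z (hz : G.dist y z ≤ r)
  have := hG.dist_triangle (u := x) (v := y) (w := z)
  change G.dist x z ≤ R
  omega

theorem iSup_dist_le_le {f : V → ℝ} {y : V} {r : ℕ} {b : ℝ}
    (h : ∀ z, G.dist y z ≤ r → f z ≤ b) : ⨆ z : {z : V // G.dist y z ≤ r}, f z.1 ≤ b :=
  haveI : Nonempty {z : V // G.dist y z ≤ r} := ⟨⟨y, by simp⟩⟩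
  ciSup_le fun z ↦ h z.1 z.2

theorem IsSubharmonicOn.le_pow_mul_iSup {ℓ L : ℕ} {q : ℝ} {f : V → ℝ} {x : V}
    (hG : G.Connected) (hq : 0 ≤ q) (hf : BddAbove (range f))
    (hsub : G.IsSubharmonicOn ℓ q f x L) (n : ℕ) {y : V}
    (hy : G.dist x y + n * (ℓ + 1) ≤ L + 1) : f y ≤ q ^ n * ⨆ z, f z := by
  induction n generalizing y with
  | zero => simpa using le_ciSup hf y
  | succ n ih =>
    have hball : {z : V | G.dist y z ≤ ℓ} ⊆ {z : V | G.dist x z ≤ L} :=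
      hG.setOf_dist_le_subset (by rw [add_mul] at hy; omega)
    have hmax : ⨆ z : {z : V // G.dist y z ≤ ℓ + 1}, f z.1 ≤ q ^ n * ⨆ z, f z :=
      iSup_dist_le_le fun z hz ↦ ih <| by
        have := hG.dist_triangle (u := x) (v := y) (w := z)
        rw [add_mul] at hy
        omega
    calc f y ≤ q * ⨆ z : {z : V // G.dist y z ≤ ℓ + 1}, f z.1 := hsub y hball
      _ ≤ q * (q ^ n * ⨆ z, f z) := by gcongr
      _ = q ^ (n + 1) * ⨆ z, f z := by ring

end SimpleGraph

theorem stmt_0_general {V : Type*} [Fintype V] (G : SimpleGraph V) (hG : G.Connected)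
    (L ℓ : ℕ) (q : ℝ) (hq0 : 0 < q)
    (f : V → ℝ) (x : V)
    (hsub : ∀ y : V, ({z : V | G.dist y z ≤ ℓ} ⊆ {z : V | G.dist x z ≤ L}) →
      f y ≤ q * ⨆ z : {z : V // G.dist y z ≤ ℓ + 1}, f z.1) :
    f x ≤ q ^ ((L + 1) / (ℓ + 1)) * ⨆ z : V, f z := by
  have hsub : G.IsSubharmonicOn ℓ q f x L := hsub
  refine hsub.le_pow_mul_iSup hG hq0.le (Finite.bddAbove_range f) _ ?_
  simpa using Nat.div_mul_le_self (L + 1) (ℓ + 1)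

/-- subharmonicity bound on a finite connected graph. -/
theorem stmt_0 {V : Type*} [Fintype V] (G : SimpleGraph V) (hG : G.Connected)
    (L ℓ : ℕ) (hLℓ : ℓ ≤ L) (q : ℝ) (hq0 : 0 < q) (hq1 : q < 1)
    (f : V → ℝ) (hf : ∀ v, 0 ≤ f v) (x : V)
    (hsub : ∀ y : V, ({z : V | G.dist y z ≤ ℓ} ⊆ {z : V | G.dist x z ≤ L}) →
      f y ≤ q * ⨆ z : {z : V // G.dist y z ≤ ℓ + 1}, f z.1) :
    f x ≤ q ^ ((L + 1) / (ℓ + 1)) * ⨆ z : V, f z :=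
  stmt_0_general G hG L ℓ q hq0 f x hsub
end

section
/- Let G be a finite connected graph, ℓ ≥ 0, q ∈ (0,1), and f : G × G → ℝ≥0. Suppose f(·,y) is (ℓ,q)-subharmonic in x on the ball B_{r'}(u') for every fixed y, and f(x,·) is (ℓ,q)-subharmonic in y on the ball B_{r''}(u'') for every fixed x, where r', r'' ≥ ℓ and d(u',u'') ≥ r' + r'' + 2. Then f(u',u'') ≤ q^(⌊(r'+1)/(ℓ+1)⌋ + ⌊(r''+1)/(ℓ+1)⌋) · max_{(x,y) ∈ G×G} f(x,y). -/
/-!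
Each application of subharmonicity at a point `x` whose `ℓ`-ball lies in `B_r(u)` trades a factor
`q` for a step of length at most `ℓ + 1` away from `x`, so starting at the centre `u` one can
iterate `⌊(r + 1) / (ℓ + 1)⌋` times before leaving `B_r(u)`. Doing this first in the second
variable at `u''`, for every first argument, and then in the first variable at `u'` multiplies
the two decay factors.
-/

namespace SimpleGraph

variable {V : Type*} (G : SimpleGraph V)

def IsSubharmonicIn (ℓ : ℕ) (q : ℝ) (g : V → ℝ) (u : V) (r : ℕ) : Prop :=
  ∀ x : V, ({z : V | G.dist x z ≤ ℓ} ⊆ {z : V | G.dist u z ≤ r}) →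
    g x ≤ q * ⨆ z : {z : V // G.dist x z ≤ ℓ + 1}, g z.1

variable {G}

theorem Connected.le_pow_mul_of_isSubharmonicIn (hG : G.Connected) {ℓ r : ℕ} {q M : ℝ}
    (hq : 0 ≤ q) {g : V → ℝ} {u : V} (hg : G.IsSubharmonicIn ℓ q g u r) (hgM : ∀ x, g x ≤ M)
    (k : ℕ) {x : V} (hx : G.dist u x + k * (ℓ + 1) ≤ r + 1) : g x ≤ q ^ k * M := by
  induction k generalizing x with
  | zero => simpa using hgM x
  | succ k ih =>
    rw [Nat.succ_mul] at hx
    have hball : {z : V | G.dist x z ≤ ℓ} ⊆ {z : V | G.dist u z ≤ r} := fun z (hz : _ ≤ ℓ) => by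
      have := hG.dist_triangle (u := u) (v := x) (w := z)
      show _ ≤ r
      omega
    have : Nonempty {z : V // G.dist x z ≤ ℓ + 1} := ⟨⟨x, by simp⟩⟩
    have hsup : ⨆ z : {z : V // G.dist x z ≤ ℓ + 1}, g z.1 ≤ q ^ k * M :=
      ciSup_le fun z => ih <| by
        have := hG.dist_triangle (u := u) (v := x) (w := z.1)
        have := z.2
        omega
    calc g x ≤ q * ⨆ z : {z : V // G.dist x z ≤ ℓ + 1}, g z.1 := hg x hball
      _ ≤ q * (q ^ k * M) := by gcongr
      _ = q ^ (k + 1) * M := by ring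

theorem Connected.apply_le_pow_mul_of_isSubharmonicIn (hG : G.Connected) {ℓ r : ℕ} {q M : ℝ}
    (hq : 0 ≤ q) {g : V → ℝ} {u : V} (hg : G.IsSubharmonicIn ℓ q g u r) (hgM : ∀ x, g x ≤ M) :
    g u ≤ q ^ ((r + 1) / (ℓ + 1)) * M :=
  hG.le_pow_mul_of_isSubharmonicIn hq hg hgM _ <| by
    simpa using Nat.div_mul_le_self (r + 1) (ℓ + 1)

end SimpleGraph

theorem stmt_1_general {V : Type*} [Fintype V] (G : SimpleGraph V) (hG : G.Connected)
    (ℓ r' r'' : ℕ)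
    (q : ℝ) (hq0 : 0 < q)
    (f : V → V → ℝ) (u' u'' : V)
    (hsub1 : ∀ y : V, ∀ x : V,
      ({z : V | G.dist x z ≤ ℓ} ⊆ {z : V | G.dist u' z ≤ r'}) →
      f x y ≤ q * ⨆ z : {z : V // G.dist x z ≤ ℓ + 1}, f z.1 y)
    (hsub2 : ∀ x : V, ∀ y : V,
      ({z : V | G.dist y z ≤ ℓ} ⊆ {z : V | G.dist u'' z ≤ r''}) →
      f x y ≤ q * ⨆ z : {z : V // G.dist y z ≤ ℓ + 1}, f x z.1) :
    f u' u'' ≤ q ^ ((r' + 1) / (ℓ + 1) + (r'' + 1) / (ℓ + 1)) *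
      ⨆ p : V × V, f p.1 p.2 := by
  have hle_sup (x y : V) : f x y ≤ ⨆ p : V × V, f p.1 p.2 :=
    le_ciSup (f := fun p : V × V => f p.1 p.2) (Set.finite_range _).bddAbove (x, y)
  have hsecond (x : V) : f x u'' ≤ q ^ ((r'' + 1) / (ℓ + 1)) * ⨆ p : V × V, f p.1 p.2 :=
    hG.apply_le_pow_mul_of_isSubharmonicIn hq0.le (hsub2 x) (hle_sup x)
  calc f u' u''
      ≤ q ^ ((r' + 1) / (ℓ + 1)) * (q ^ ((r'' + 1) / (ℓ + 1)) * ⨆ p : V × V, f p.1 p.2) :=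
        hG.apply_le_pow_mul_of_isSubharmonicIn (g := (f · u'')) hq0.le (hsub1 u'') hsecond
    _ = _ := by rw [pow_add, mul_assoc]

/-- two-variable subharmonicity bound on a finite connected graph. -/
theorem stmt_1 {V : Type*} [Fintype V] (G : SimpleGraph V) (hG : G.Connected)
    (ℓ r' r'' : ℕ) (hr' : ℓ ≤ r') (hr'' : ℓ ≤ r'')
    (q : ℝ) (hq0 : 0 < q) (hq1 : q < 1)
    (f : V → V → ℝ) (hf : ∀ v w, 0 ≤ f v w) (u' u'' : V)
    (hdist : r' + r'' + 2 ≤ G.dist u' u'')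
    (hsub1 : ∀ y : V, ∀ x : V,
      ({z : V | G.dist x z ≤ ℓ} ⊆ {z : V | G.dist u' z ≤ r'}) →
      f x y ≤ q * ⨆ z : {z : V // G.dist x z ≤ ℓ + 1}, f z.1 y)
    (hsub2 : ∀ x : V, ∀ y : V,
      ({z : V | G.dist y z ≤ ℓ} ⊆ {z : V | G.dist u'' z ≤ r''}) →
      f x y ≤ q * ⨆ z : {z : V // G.dist y z ≤ ℓ + 1}, f x z.1) :
    f u' u'' ≤ q ^ ((r' + 1) / (ℓ + 1) + (r'' + 1) / (ℓ + 1)) *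
      ⨆ p : V × V, f p.1 p.2 :=
  stmt_1_general G hG ℓ r' r'' q hq0 f u' u'' hsub1 hsub2
end

section
/- Let Z be a graph (the 1-particle configuration space), N ≥ 1, and for x = (x_1,…,x_N) ∈ Z^N let Π x = {x_1,…,x_N} ⊆ Z. Define the N-particle ball B_L(x) = ∏_j B_L(x_j) and its support Π B_L(x) = ⋃_j B_L(x_j). If ρ(x,y) := max_j d(x_j,y_j) > diam(Π x) + 3NL, then B_L(y) is separable from B_L(x): there exists a nonempty J ⊆ {1,…,N} with (⋃_{i∈J} B_L(y_i)) ∩ (⋃_j B_L(x_j)) = ∅ and d(⋃_{i∈J} B_L(y_i), ⋃_{i∉J} B_L(y_i)) ≥ 1 unless J = {1,…,N}. -/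
/-- separability of distant multi-particle balls. -/
theorem stmt_3 {Z : Type*} [Countable Z] (G : SimpleGraph Z) (hG : G.Connected)
    (N : ℕ) (hN : 1 ≤ N) (L : ℕ) (x y : Fin N → Z)
    (hfar : (Finset.univ.sup fun p : Fin N × Fin N => G.dist (x p.1) (x p.2)) + 3 * N * L
      < Finset.univ.sup fun j : Fin N => G.dist (x j) (y j)) :
    ∃ J : Finset (Fin N), J.Nonempty ∧
      (⋃ i ∈ J, {v : Z | G.dist (y i) v ≤ L}) ∩ (⋃ j : Fin N, {v : Z | G.dist (x j) v ≤ L})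
        = ∅ ∧
      (J ≠ Finset.univ →
        (⋃ i ∈ J, {v : Z | G.dist (y i) v ≤ L}) ∩
          (⋃ i ∈ Jᶜ, {v : Z | G.dist (y i) v ≤ L}) = ∅) := by
  haveI : NeZero N := ⟨by omega⟩
  have hne : (Finset.univ : Finset (Fin N)).Nonempty := Finset.univ_nonempty
  set D := Finset.univ.sup fun p : Fin N × Fin N => G.dist (x p.1) (x p.2) with hDdef
  set g : Fin N → ℕ := fun i => Finset.univ.inf' hne fun k => G.dist (x k) (y i) with hgdef
  have hD : ∀ a b : Fin N, G.dist (x a) (x b) ≤ D := fun a b =>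
    Finset.le_sup (f := fun p : Fin N × Fin N => G.dist (x p.1) (x p.2)) (Finset.mem_univ (a, b))
  have hg_le : ∀ i k, g i ≤ G.dist (x k) (y i) := fun i k =>
    Finset.inf'_le _ (Finset.mem_univ k)
  have tri : ∀ a b c : Z, G.dist a c ≤ G.dist a b + G.dist b c := fun a b c =>
    hG.dist_triangle
  have hg_tri : ∀ i k, g i ≤ g k + G.dist (y k) (y i) := by
    intro i k
    obtain ⟨m, -, hm⟩ := Finset.exists_mem_eq_inf' hne fun j => G.dist (x j) (y k)
    calc g i ≤ G.dist (x m) (y i) := hg_le i m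
      _ ≤ G.dist (x m) (y k) + G.dist (y k) (y i) := tri _ _ _
      _ = g k + G.dist (y k) (y i) := by rw [hgdef]; simp only; rw [hm]
  obtain ⟨j0, -, hj0⟩ := Finset.exists_mem_eq_sup Finset.univ hne
      fun j : Fin N => G.dist (x j) (y j)
  rw [hj0] at hfar
  have hj0far : 3 * N * L < g j0 := by
    rw [hgdef]
    simp only
    rw [Finset.lt_inf'_iff]
    intro k _
    have h1 : G.dist (x j0) (y j0) ≤ G.dist (x j0) (x k) + G.dist (x k) (y j0) := tri _ _ _
    have h2 := hD j0 k
    omega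
  -- basic disjointness of a far ball from all x-balls
  have ball_dis : ∀ i v, 2 * L < g i → G.dist (y i) v ≤ L →
      ∀ k : Fin N, ¬ G.dist (x k) v ≤ L := by
    intro i v hi hv k hk
    have h0 : g i ≤ G.dist (x k) (y i) := hg_le i k
    have h1 : G.dist (x k) (y i) ≤ G.dist (x k) v + G.dist v (y i) := tri _ _ _
    have h2 : G.dist v (y i) = G.dist (y i) v := G.dist_comm
    omega
  by_cases hcase : ∃ t : ℕ, t < N ∧ ∀ i, ¬ (2 * L * (t + 1) < g i ∧ g i ≤ 2 * L * (t + 2))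
  · -- some annulus is empty: threshold T = 2L(t+1)
    obtain ⟨t, ht, hempty⟩ := hcase
    refine ⟨Finset.univ.filter fun i => 2 * L * (t + 1) < g i, ⟨j0, ?_⟩, ?_, ?_⟩
    · simp only [Finset.mem_filter, Finset.mem_univ, true_and]
      have : 2 * L * (t + 1) ≤ 3 * N * L := by nlinarith
      omega
    · rw [Set.eq_empty_iff_forall_notMem]
      rintro v ⟨hv1, hv2⟩
      simp only [Set.mem_iUnion, Set.mem_setOf_eq, Finset.mem_filter, Finset.mem_univ,
        true_and] at hv1 hv2
      obtain ⟨i, hi, hvi⟩ := hv1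
      obtain ⟨k, hvk⟩ := hv2
      have h2L : 2 * L < g i := by
        have : 2 * L ≤ 2 * L * (t + 1) := by nlinarith
        omega
      exact ball_dis i v h2L hvi k hvk
    · intro _
      rw [Set.eq_empty_iff_forall_notMem]
      rintro v ⟨hv1, hv2⟩
      simp only [Set.mem_iUnion, Set.mem_setOf_eq, Finset.mem_filter, Finset.mem_compl,
        Finset.mem_univ, true_and, not_lt] at hv1 hv2
      obtain ⟨i, hi, hvi⟩ := hv1
      obtain ⟨k, hk, hvk⟩ := hv2
      have hyy : G.dist (y k) (y i) ≤ 2 * L := by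
        have h1 : G.dist (y k) (y i) ≤ G.dist (y k) v + G.dist v (y i) := tri _ _ _
        have h2 : G.dist v (y i) = G.dist (y i) v := G.dist_comm
        have h3 : G.dist (y k) v ≤ L := hvk
        omega
      have h4 : g i ≤ g k + 2 * L := le_trans (hg_tri i k) (by omega)
      have h5 := hempty i
      have h6 : 2 * L * (t + 2) = 2 * L * (t + 1) + 2 * L := by ring
      omega
  · -- all annuli occupied: pigeonhole forces all g i > 2L, take J = univ
    push_neg at hcase
    have hwit : ∀ t : Fin N, ∃ i, 2 * L * ((t : ℕ) + 1) < g i ∧ g i ≤ 2 * L * ((t : ℕ) + 2) :=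
      fun t => hcase (t : ℕ) t.2
    choose f hf1 hf2 using hwit
    have hinj : Function.Injective f := by
      intro a b hab
      by_contra hab'
      have ha1 := hf1 a
      have ha2 := hf2 a
      have hb1 := hf1 b
      have hb2 := hf2 b
      rw [hab] at ha1 ha2
      rcases lt_trichotomy (a : ℕ) (b : ℕ) with h | h | h
      · have : 2 * L * ((a : ℕ) + 2) ≤ 2 * L * ((b : ℕ) + 1) :=
          Nat.mul_le_mul_left _ (by omega)
        omega
      · exact hab' (Fin.ext h)
      · have : 2 * L * ((b : ℕ) + 2) ≤ 2 * L * ((a : ℕ) + 1) :=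
          Nat.mul_le_mul_left _ (by omega)
        omega
    have hsurj : Function.Surjective f := Finite.surjective_of_injective hinj
    have hall : ∀ i, 2 * L < g i := by
      intro i
      obtain ⟨t, rfl⟩ := hsurj i
      have h1 := hf1 t
      have : 2 * L ≤ 2 * L * ((t : ℕ) + 1) := by nlinarith
      omega
    refine ⟨Finset.univ, hne, ?_, fun h => absurd rfl h⟩
    rw [Set.eq_empty_iff_forall_notMem]
    rintro v ⟨hv1, hv2⟩
    simp only [Set.mem_iUnion, Set.mem_setOf_eq, Finset.mem_univ, true_and] at hv1 hv2
    obtain ⟨i, -, hvi⟩ := hv1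
    obtain ⟨k, hvk⟩ := hv2
    exact ball_dis i v (hall i) hvi k hvk
end
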